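/- arXiv:1403.7247 — 5 statements merged into one kernel-verified Lean document; each statement's English description precedes it below -/
import Mathlib

section
/- For every real number $t > 1$, one has $\frac{1}{6(t-1)} < \left(\frac{1}{(t-1)(2t-1)}\right)^{1/t}$. -/
theorem stmt_0 (t : ℝ) (ht : 1 < t) :
    1 / (6 * (t - 1)) < (1 / ((t - 1) * (2 * t - 1))) ^ (1 / t) := by
  have hu : 0 < t - 1 := by linarith
  have hx : 0 < (t - 1) * (2 * t - 1) := by nlinarith
  have h6 : (0:ℝ) < 6 * (t - 1) := by linarith
  have ht0 : 0 < t := by linarith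
  have h1t : 0 < 1 / t := by positivity
  -- key inequality
  have key : (t - 1) * (2 * t - 1) < (6 * (t - 1)) ^ t := by
    rcases le_or_gt 2 t with h2 | h2
    · have h1 : (1:ℝ) ≤ 6 * (t - 1) := by linarith
      have hle := Real.rpow_le_rpow_of_exponent_le h1 h2
      have hsq : (6 * (t - 1)) ^ (2:ℝ) = (6 * (t - 1)) * (6 * (t - 1)) := by
        rw [show (2:ℝ) = ((2:ℕ):ℝ) by norm_num, Real.rpow_natCast]
        ring
      rw [hsq] at hle
      nlinarith [hle]
    · set b := 6 * (t - 1) with hb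
      have hlogb : 1 - b⁻¹ ≤ Real.log b := by
        have h := Real.log_le_sub_one_of_pos (x := b⁻¹) (by positivity)
        rw [Real.log_inv] at h
        linarith
      have hmul : b - 1 ≤ b * Real.log b := by
        have := mul_le_mul_of_nonneg_left hlogb h6.le
        have hbne : b ≠ 0 := ne_of_gt h6
        calc b - 1 = b * (1 - b⁻¹) := by field_simp
          _ ≤ b * Real.log b := this
      have hexp : b ^ t = b * Real.exp (Real.log b * (t - 1)) := by
        rw [Real.rpow_def_of_pos h6]
        rw [show Real.log b * t = Real.log b + Real.log b * (t - 1) by ring,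
          Real.exp_add, Real.exp_log h6]
      have hbound : Real.log b * (t - 1) ≥ -(1/6) := by
        have : Real.log b * (t - 1) = (b * Real.log b) / 6 := by
          rw [hb]; ring
        rw [this]
        have : b - 1 ≥ -1 := by simp [hb]; linarith
        linarith [hmul]
      have hexpge : Real.exp (Real.log b * (t - 1)) ≥ 5/6 := by
        have := Real.add_one_le_exp (Real.log b * (t - 1))
        linarith
      have : b ^ t ≥ b * (5/6) := by
        rw [hexp]
        exact mul_le_mul_of_nonneg_left hexpge h6.le
      have hb5 : b * (5/6) = 5 * (t - 1) := by rw [hb]; ring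
      rw [hb5] at this
      nlinarith [this]
  -- take 1/t powers
  have step : ((t - 1) * (2 * t - 1)) ^ (1 / t) < 6 * (t - 1) := by
    have h := Real.rpow_lt_rpow hx.le key h1t
    rwa [← Real.rpow_mul h6.le, mul_one_div_cancel (ne_of_gt ht0),
      Real.rpow_one] at h
  have hpos : (0:ℝ) < ((t - 1) * (2 * t - 1)) ^ (1 / t) := Real.rpow_pos_of_pos hx _
  rw [one_div, one_div, Real.inv_rpow hx.le, ← one_div, ← one_div]
  exact one_div_lt_one_div_of_lt hpos step
end

section
/- For every real number $t > 1$, one has $\frac{t}{6(t-1)} < \left(\frac{1}{(t-1)(2t-1)}\right)^{1/t}$. -/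
theorem stmt_1 (t : ℝ) (ht : 1 < t) :
    t / (6 * (t - 1)) < (1 / ((t - 1) * (2 * t - 1))) ^ (1 / t) := by
  have ht0 : (0:ℝ) < t := by linarith
  have ht1 : (0:ℝ) < t - 1 := by linarith
  have hX : (0:ℝ) < (t - 1) * (2 * t - 1) := by nlinarith
  have hA : (0:ℝ) < 6 * (t - 1) / t := by positivity
  -- key: (t-1)(2t-1) < (6(t-1)/t)^t
  have key : (t - 1) * (2 * t - 1) < (6 * (t - 1) / t) ^ t := by
    rcases lt_or_ge t 3 with h3 | h3
    · -- Bernoulli: (1+s)^t ≥ 1 + t s with s = 6(t-1)/t - 1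
      have hs : (-1:ℝ) ≤ 6 * (t - 1) / t - 1 := by
        have : (0:ℝ) ≤ 6 * (t - 1) / t := le_of_lt hA
        linarith
      have hb := one_add_mul_self_le_rpow_one_add hs (le_of_lt ht)
      rw [add_sub_cancel] at hb
      have hval : 1 + t * (6 * (t - 1) / t - 1) = 5 * t - 5 := by
        field_simp
        ring
      rw [hval] at hb
      nlinarith
    · -- t ≥ 3 : base ≥ 4, and 4^t = (4^(t/2))^2 ≥ (1 + 3t/2)^2
      have hbase : (4:ℝ) ≤ 6 * (t - 1) / t := by
        rw [le_div_iff₀ ht0]; nlinarith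
      have h1 : (1 + 3 * (t/2) : ℝ) ≤ (4:ℝ) ^ (t/2) := by
        have := one_add_mul_self_le_rpow_one_add (by norm_num : (-1:ℝ) ≤ 3)
          (by linarith : (1:ℝ) ≤ t/2)
        rw [mul_comm] at this
        norm_num at this
        linarith
      have h2 : ((4:ℝ) ^ (t/2)) ^ (2:ℕ) = (4:ℝ) ^ t := by
        rw [← Real.rpow_natCast ((4:ℝ) ^ (t/2)) 2, ← Real.rpow_mul (by norm_num)]
        norm_num
      have h4 : (4:ℝ) ^ t ≤ (6 * (t - 1) / t) ^ t :=
        Real.rpow_le_rpow (by norm_num) hbase (le_of_lt ht0)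
      have h5 : (1 + 3 * (t/2)) ^ (2:ℕ) ≤ ((4:ℝ) ^ (t/2)) ^ (2:ℕ) := by
        apply pow_le_pow_left₀ (by linarith) h1
      have h6 : (t - 1) * (2 * t - 1) < (1 + 3 * (t/2)) ^ (2:ℕ) := by nlinarith
      calc (t - 1) * (2 * t - 1) < (1 + 3 * (t/2)) ^ (2:ℕ) := h6
        _ ≤ ((4:ℝ) ^ (t/2)) ^ (2:ℕ) := h5
        _ = (4:ℝ) ^ t := h2
        _ ≤ (6 * (t - 1) / t) ^ t := h4
  -- conclude
  have hAt : (0:ℝ) < (6 * (t - 1) / t) ^ t := Real.rpow_pos_of_pos hA t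
  have hLHS : t / (6 * (t - 1)) = (((6 * (t - 1) / t) ^ t)⁻¹) ^ (1 / t) := by
    rw [← Real.rpow_neg_one ((6 * (t - 1) / t) ^ t), ← Real.rpow_mul (le_of_lt hA),
      ← Real.rpow_mul (le_of_lt hA)]
    rw [show t * -1 * (1 / t) = -1 by field_simp, Real.rpow_neg_one]
    rw [inv_div]
  have hinvlt : ((6 * (t - 1) / t) ^ t)⁻¹ < ((t - 1) * (2 * t - 1))⁻¹ := by
    exact inv_strictAnti₀ hX key
  have := Real.rpow_lt_rpow (by positivity) hinvlt (by positivity : (0:ℝ) < 1 / t)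
  rw [hLHS]
  rw [one_div ((t - 1) * (2 * t - 1))]
  exact this
end

section
/- For every real number $t > 1$, one has $\frac{1}{\sqrt{3}\, e^{2/e}} \cdot \frac{t}{t-1} < \left(\frac{1}{(t-1)(2t-1)}\right)^{1/t}$. -/
open Real

/-- `log x ≤ (x - 1/x)/2` for `x ≥ 1` (sinh y ≥ y). -/
lemma aux_log_le_half {x : ℝ} (hx : 1 ≤ x) : Real.log x ≤ (x - 1/x) / 2 := by
  have hx0 : 0 < x := by linarith
  set y := Real.log x with hy
  have hy0 : 0 ≤ y := Real.log_nonneg hx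
  have hxe : x = Real.exp y := (Real.exp_log hx0).symm
  have hq : 1 + y + y ^ 2 / 2 ≤ Real.exp y := Real.quadratic_le_exp_of_nonneg hy0
  have hz : 0 < Real.exp y := Real.exp_pos y
  rw [hxe]
  have h3 : 1 + y ^ 2 / 2 ≤ Real.exp y - y := by linarith
  have h4 : (1 + y ^ 2 / 2) ^ 2 ≤ (Real.exp y - y) ^ 2 := by
    nlinarith [sq_nonneg y]
  have h5 : 1 / Real.exp y ≤ Real.exp y - 2 * y := by
    rw [div_le_iff₀ hz]
    nlinarith [sq_nonneg y, sq_nonneg (y ^ 2)]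
  linarith

/-- `t log t ≤ t log 2 + (t-1) log (t-1)` for `t > 1`. -/
lemma aux_phi (t : ℝ) (ht : 1 < t) :
    t * Real.log t ≤ t * Real.log 2 + (t - 1) * Real.log (t - 1) := by
  have h0 : 0 < t := by linarith
  have h1 : 0 < t - 1 := by linarith
  rcases le_or_gt t 2 with h2 | h2
  · -- 1 < t ≤ 2
    have hgt : (1 : ℝ) ≤ 1 / (t - 1) := by
      rw [le_div_iff₀ h1]; linarith
    have hA := aux_log_le_half hgt
    rw [one_div_one_div] at hA
    have hlog : Real.log (1 / (t - 1)) = -Real.log (t - 1) := by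
      rw [one_div, Real.log_inv]
    rw [hlog] at hA
    have hmul := mul_le_mul_of_nonneg_left hA h1.le
    have he : (t - 1) * ((1 / (t - 1) - (t - 1)) / 2) = (1 - (t - 1) ^ 2) / 2 := by
      field_simp
    rw [he] at hmul
    have hB : Real.log (t / 2) ≤ t / 2 - 1 :=
      Real.log_le_sub_one_of_pos (by linarith)
    rw [Real.log_div (by linarith) (by norm_num)] at hB
    have hB' : t * (Real.log t - Real.log 2) ≤ t * (t / 2 - 1) :=
      mul_le_mul_of_nonneg_left hB h0.le
    nlinarith [hmul, hB']
  · -- t > 2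
    have hB : Real.log (t / 2) ≤ t / 2 - 1 :=
      Real.log_le_sub_one_of_pos (by linarith)
    rw [Real.log_div (by linarith) (by norm_num)] at hB
    have hC : Real.log (t / (2 * t - 2)) ≤ t / (2 * t - 2) - 1 :=
      Real.log_le_sub_one_of_pos (div_pos h0 (by linarith))
    rw [Real.log_div (by linarith) (by linarith)] at hC
    have hlog22 : Real.log (2 * t - 2) = Real.log 2 + Real.log (t - 1) := by
      rw [show 2 * t - 2 = 2 * (t - 1) by ring,
        Real.log_mul (by norm_num) (by linarith)]
    rw [hlog22] at hC
    have hmul := mul_le_mul_of_nonneg_left hC h1.le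
    have he : (t - 1) * (t / (2 * t - 2) - 1) = t / 2 - t + 1 := by
      have hne : (2 * t - 2) ≠ 0 := by intro h; nlinarith
      field_simp
      ring
    rw [he] at hmul
    nlinarith [hB, hmul]

/-- `log (2t-1) < 4t/7` for `t > 1`. -/
lemma aux_psi (t : ℝ) (ht : 1 < t) : Real.log (2 * t - 1) < 4 * t / 7 := by
  have h2 : 0 < 2 * t - 1 := by linarith
  have htan : Real.log ((2 * t - 1) / (7 / 2)) ≤ (2 * t - 1) / (7 / 2) - 1 :=
    Real.log_le_sub_one_of_pos (by positivity)
  rw [Real.log_div (by linarith) (by norm_num)] at htan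
  have hdiv : (2 * t - 1) / (7 / 2) - 1 = 4 * t / 7 - 9 / 7 := by ring
  rw [hdiv] at htan
  have h72 : Real.log (7 / 2) < 9 / 7 := by
    rw [Real.log_lt_iff_lt_exp (by norm_num)]
    have he : Real.exp (9 / 7 : ℝ)
        = Real.exp 1 * (Real.exp (1 / 7) * Real.exp (1 / 7)) := by
      rw [← Real.exp_add, ← Real.exp_add]; norm_num
    have e1 : (2.7182818283 : ℝ) < Real.exp 1 := Real.exp_one_gt_d9
    have e2 : (8 / 7 : ℝ) ≤ Real.exp (1 / 7) := by
      have := Real.add_one_le_exp (1 / 7 : ℝ); linarith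
    have e3 : (0 : ℝ) < Real.exp (1 / 7) := Real.exp_pos _
    have e5 : (64 / 49 : ℝ) ≤ Real.exp (1 / 7) * Real.exp (1 / 7) := by nlinarith
    have e6 : Real.exp 1 * (64 / 49) ≤ Real.exp 1 * (Real.exp (1 / 7) * Real.exp (1 / 7)) :=
      mul_le_mul_of_nonneg_left e5 (Real.exp_pos 1).le
    have e7 : (2.7182818283 : ℝ) * (64 / 49) < Real.exp 1 * (64 / 49) :=
      mul_lt_mul_of_pos_right e1 (by norm_num)
    rw [he]; linarith
  linarith

/-- Numeric: `log 2 + 4/7 < log 3 / 2 + 2 / e`. -/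
lemma aux_num : Real.log 2 + 4 / 7 < Real.log 3 / 2 + 2 / Real.exp 1 := by
  have h43 : Real.log (4 / 3) ≤ 3 / 10 := by
    rw [Real.log_le_iff_le_exp (by norm_num)]
    have he : Real.exp (3 / 10 : ℝ) = Real.exp (3 / 40) ^ (4 : ℕ) := by
      rw [← Real.exp_nat_mul]; norm_num
    have e2 : (43 / 40 : ℝ) ≤ Real.exp (3 / 40) := by
      have := Real.add_one_le_exp (3 / 40 : ℝ); linarith
    have e3 : ((43 : ℝ) / 40) ^ (4 : ℕ) ≤ Real.exp (3 / 40) ^ (4 : ℕ) :=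
      pow_le_pow_left₀ (by norm_num) e2 4
    rw [he]
    nlinarith [e3]
  have hlog43 : Real.log (4 / 3) = 2 * Real.log 2 - Real.log 3 := by
    rw [Real.log_div (by norm_num) (by norm_num),
      show (4 : ℝ) = 2 ^ (2 : ℕ) by norm_num, Real.log_pow]
    push_cast; ring
  have hlt : (101 / 140 : ℝ) < 2 / Real.exp 1 := by
    rw [div_lt_div_iff₀ (by norm_num) (Real.exp_pos 1)]
    nlinarith [Real.exp_one_lt_d9]
  rw [hlog43] at h43
  linarith

theorem stmt_2 (t : ℝ) (ht : 1 < t) :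
    (1 / (Real.sqrt 3 * Real.exp (2 / Real.exp 1))) * (t / (t - 1)) <
      (1 / ((t - 1) * (2 * t - 1))) ^ (1 / t) := by
  have h0 : 0 < t := by linarith
  have h1 : 0 < t - 1 := by linarith
  have h2 : 0 < 2 * t - 1 := by linarith
  have hu : 0 < (t - 1) * (2 * t - 1) := mul_pos h1 h2
  have hiu : 0 < 1 / ((t - 1) * (2 * t - 1)) := by positivity
  have hs3 : 0 < Real.sqrt 3 := Real.sqrt_pos.mpr (by norm_num)
  have hex : 0 < Real.exp (2 / Real.exp 1) := Real.exp_pos _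
  have hL : 0 < (1 / (Real.sqrt 3 * Real.exp (2 / Real.exp 1))) * (t / (t - 1)) := by
    positivity
  rw [Real.rpow_def_of_pos hiu, ← Real.log_lt_iff_lt_exp hL]
  have hlogL : Real.log ((1 / (Real.sqrt 3 * Real.exp (2 / Real.exp 1))) * (t / (t - 1)))
      = -(Real.log 3 / 2 + 2 / Real.exp 1) + (Real.log t - Real.log (t - 1)) := by
    rw [show (1 / (Real.sqrt 3 * Real.exp (2 / Real.exp 1)))
          = (Real.sqrt 3 * Real.exp (2 / Real.exp 1))⁻¹ from one_div _,
      Real.log_mul (inv_ne_zero (by positivity)) (div_ne_zero (ne_of_gt h0) (ne_of_gt h1)),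
      Real.log_inv, Real.log_mul (ne_of_gt hs3) (ne_of_gt hex),
      Real.log_sqrt (by norm_num), Real.log_exp,
      Real.log_div (ne_of_gt h0) (ne_of_gt h1)]
  have hlogU : Real.log (1 / ((t - 1) * (2 * t - 1)))
      = -(Real.log (t - 1) + Real.log (2 * t - 1)) := by
    rw [one_div, Real.log_inv, Real.log_mul (ne_of_gt h1) (ne_of_gt h2)]
  rw [hlogL, hlogU, mul_one_div, lt_div_iff₀ h0]
  have hphi := aux_phi t ht
  have hpsi := aux_psi t ht
  have hnum : t * (Real.log 2 + 4 / 7) < t * (Real.log 3 / 2 + 2 / Real.exp 1) :=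
    mul_lt_mul_of_pos_left aux_num h0
  nlinarith [hphi, hpsi, hnum]
end

section
/- The functions $u(t) = -\log(1 - e^{-t})$ and $s(t) = \frac{t}{1 - e^{-t}} - 1$ on $(0, +\infty)$ satisfy the ODE system: (1) $\left(s + \frac{(s')^2}{u''s - s''}\right)e^{u - t} = 1$ and (2) $s' - s u' = 1$; moreover $s(t) \geq 0$, $u''(t)s(t) - s''(t) > 0$ for all $t > 0$, and $\lim_{t\to+\infty} u(t) = 0$. -/
/-!
Everything is explicit in `q = e^{-t}` and `d = 1 - q`: `u' = -q/d`, `u'' = q/d²`,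
`s' = (d - t q)/d²`, and `u'' s - s'' = q (d - t q)/d³`. Identities (1) and (2) are then
rational identities in `t, q`, and both inequalities come from `1 + x ≤ eˣ`:
`s ≥ 0` from `x = -t`, and `d - t q > 0` from the strict form at `x = t`.
-/

open Real Filter Topology Set

lemma one_sub_exp_neg_pos {t : ℝ} (ht : 0 < t) : 0 < 1 - exp (-t) := by
  have : exp (-t) < 1 := exp_lt_one_iff.mpr (neg_neg_iff_pos.mpr ht)
  linarith

lemma mul_exp_neg_lt_one_sub_exp_neg {t : ℝ} (ht : t ≠ 0) : t * exp (-t) < 1 - exp (-t) := by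
  have h : exp (-t) * (t + 1) < exp (-t) * exp t := by
    gcongr
    exact add_one_lt_exp ht
  rw [← exp_add, neg_add_cancel, exp_zero] at h
  linarith

lemma hasDerivAt_exp_neg (t : ℝ) : HasDerivAt (fun x => exp (-x)) (-exp (-t)) t := by
  simpa using (hasDerivAt_neg t).exp

lemma hasDerivAt_one_sub_exp_neg (t : ℝ) : HasDerivAt (fun x => 1 - exp (-x)) (exp (-t)) t := by
  simpa using (hasDerivAt_exp_neg t).const_sub 1

lemma deriv_deriv_eq_of_hasDerivAt {f f' : ℝ → ℝ} {f'' : ℝ} {t : ℝ} {s : Set ℝ} (hs : s ∈ 𝓝 t)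
    (hf : ∀ x ∈ s, HasDerivAt f (f' x) x) (hf' : HasDerivAt f' f'' t) :
    deriv (deriv f) t = f'' := by
  have : deriv f =ᶠ[𝓝 t] f' := Filter.eventually_of_mem hs fun x hx => (hf x hx).deriv
  rw [this.deriv_eq, hf'.deriv]

lemma hasDerivAt_neg_log_one_sub_exp_neg {t : ℝ} (ht : 0 < t) :
    HasDerivAt (fun x => -log (1 - exp (-x))) (-(exp (-t) / (1 - exp (-t)))) t :=
  ((hasDerivAt_one_sub_exp_neg t).log (one_sub_exp_neg_pos ht).ne').neg

lemma hasDerivAt_div_one_sub_exp_neg_sub_one {t : ℝ} (ht : 0 < t) :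
    HasDerivAt (fun x => x / (1 - exp (-x)) - 1)
      ((1 - exp (-t) - t * exp (-t)) / (1 - exp (-t)) ^ 2) t := by
  simpa using ((hasDerivAt_id t).div (hasDerivAt_one_sub_exp_neg t)
    (one_sub_exp_neg_pos ht).ne').sub_const 1

lemma deriv_deriv_neg_log_one_sub_exp_neg {t : ℝ} (ht : 0 < t) :
    deriv (deriv fun x => -log (1 - exp (-x))) t = exp (-t) / (1 - exp (-t)) ^ 2 := by
  refine deriv_deriv_eq_of_hasDerivAt (Ioi_mem_nhds ht)
    (fun x hx => hasDerivAt_neg_log_one_sub_exp_neg hx) ?_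
  have hd := (one_sub_exp_neg_pos ht).ne'
  refine ((hasDerivAt_exp_neg t).div (hasDerivAt_one_sub_exp_neg t) hd).neg.congr_deriv ?_
  field_simp
  ring

lemma deriv_deriv_div_one_sub_exp_neg_sub_one {t : ℝ} (ht : 0 < t) :
    deriv (deriv fun x => x / (1 - exp (-x)) - 1) t =
      exp (-t) * (t * (1 + exp (-t)) - 2 * (1 - exp (-t))) / (1 - exp (-t)) ^ 3 := by
  refine deriv_deriv_eq_of_hasDerivAt (Ioi_mem_nhds ht)
    (fun x hx => hasDerivAt_div_one_sub_exp_neg_sub_one hx) ?_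
  have hd := (one_sub_exp_neg_pos ht).ne'
  have hN : HasDerivAt (fun x => 1 - exp (-x) - x * exp (-x)) (t * exp (-t)) t := by
    refine ((hasDerivAt_one_sub_exp_neg t).sub
      ((hasDerivAt_id t).mul (hasDerivAt_exp_neg t))).congr_deriv ?_
    simp only [id]
    ring
  refine (hN.div ((hasDerivAt_one_sub_exp_neg t).pow 2) (pow_ne_zero 2 hd)).congr_deriv ?_
  simp only [Pi.pow_apply]
  field_simp
  ring

lemma tendsto_neg_log_one_sub_exp_neg_atTop :
    Tendsto (fun t => -log (1 - exp (-t))) atTop (𝓝 0) := by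
  have hcont : ContinuousAt (fun y => -log (1 - y)) 0 :=
    ((continuousAt_log (by norm_num)).comp (continuousAt_const.sub continuousAt_id)).neg
  simpa [Function.comp_def] using hcont.tendsto.comp tendsto_exp_neg_atTop_nhds_zero

theorem stmt_7 (u s : ℝ → ℝ)
    (hu : ∀ t, u t = -Real.log (1 - Real.exp (-t)))
    (hs : ∀ t, s t = t / (1 - Real.exp (-t)) - 1) :
    (∀ t > (0 : ℝ),
      (s t + (deriv s t) ^ 2 / (deriv (deriv u) t * s t - deriv (deriv s) t)) *
          Real.exp (u t - t) = 1 ∧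
      deriv s t - s t * deriv u t = 1 ∧
      0 ≤ s t ∧
      0 < deriv (deriv u) t * s t - deriv (deriv s) t) ∧
    Filter.Tendsto u Filter.atTop (nhds 0) := by
  obtain rfl : u = fun x => -log (1 - exp (-x)) := funext hu
  obtain rfl : s = fun x => x / (1 - exp (-x)) - 1 := funext hs
  refine ⟨fun t ht => ?_, tendsto_neg_log_one_sub_exp_neg_atTop⟩
  have hd := one_sub_exp_neg_pos ht
  have hgap := mul_exp_neg_lt_one_sub_exp_neg ht.ne'
  simp only [(hasDerivAt_neg_log_one_sub_exp_neg ht).deriv,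
    (hasDerivAt_div_one_sub_exp_neg_sub_one ht).deriv,
    deriv_deriv_neg_log_one_sub_exp_neg ht, deriv_deriv_div_one_sub_exp_neg_sub_one ht]
  have hkey : exp (-t) / (1 - exp (-t)) ^ 2 * (t / (1 - exp (-t)) - 1) -
      exp (-t) * (t * (1 + exp (-t)) - 2 * (1 - exp (-t))) / (1 - exp (-t)) ^ 3 =
      exp (-t) * (1 - exp (-t) - t * exp (-t)) / (1 - exp (-t)) ^ 3 := by
    field_simp
    ring
  have hexp : exp (-log (1 - exp (-t)) - t) = exp (-t) / (1 - exp (-t)) := by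
    rw [show -log (1 - exp (-t)) - t = -t - log (1 - exp (-t)) by ring, exp_sub, exp_log hd]
  rw [hkey, hexp]
  refine ⟨?_, ?_, ?_, ?_⟩
  · field_simp
    ring
  · field_simp
    ring
  · have : 1 ≤ t / (1 - exp (-t)) := (one_le_div hd).mpr (by linarith [add_one_le_exp (-t)])
    linarith
  · exact div_pos (mul_pos (exp_pos _) (sub_pos.mpr hgap)) (pow_pos hd 3)
end

section
/- Fix a positive integer $\delta$. The functions $u(t) = -\log\left(1 + \frac{1}{\delta} - e^{-t}\right)$ and $s(t) = \frac{(1+\frac{1}{\delta})t + \frac{1}{\delta}(1+\frac{1}{\delta})}{1 + \frac{1}{\delta} - e^{-t}} - 1$ on $(0,+\infty)$ satisfy: (1) $\left(s + \frac{(s')^2}{u''s - s''}\right)e^{u-t} = 1$; (2) $s' - s u' = 1$; moreover $s(t) \geq \frac{1}{\delta}$, $u'(t) \leq 0$, and $u''(t)s(t) - s''(t) > 0$ for all $t > 0$. -/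
theorem stmt_8 (δ : ℕ) (hδ : 0 < δ) (u s : ℝ → ℝ)
    (hu : ∀ t, u t = -Real.log (1 + 1 / (δ : ℝ) - Real.exp (-t)))
    (hs : ∀ t, s t =
      ((1 + 1 / (δ : ℝ)) * t + (1 / (δ : ℝ)) * (1 + 1 / (δ : ℝ))) /
        (1 + 1 / (δ : ℝ) - Real.exp (-t)) - 1) :
    ∀ t > (0 : ℝ),
      (s t + (deriv s t) ^ 2 / (deriv (deriv u) t * s t - deriv (deriv s) t)) *
          Real.exp (u t - t) = 1 ∧
      deriv s t - s t * deriv u t = 1 ∧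
      1 / (δ : ℝ) ≤ s t ∧
      deriv u t ≤ 0 ∧
      0 < deriv (deriv u) t * s t - deriv (deriv s) t := by
  have hδpos : (0:ℝ) < (δ:ℝ) := Nat.cast_pos.mpr hδ
  set c : ℝ := 1 + 1/(δ:ℝ) with hcdef
  have hδc : (1:ℝ)/(δ:ℝ) = c - 1 := by rw [hcdef]; ring
  have hc1 : 1 < c := by
    have : 0 < 1/(δ:ℝ) := by positivity
    rw [hcdef]; linarith
  clear_value c
  clear hcdef
  have hE : ∀ x : ℝ, HasDerivAt (fun y => Real.exp (-y)) (-Real.exp (-x)) x := by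
    intro x
    simpa using (hasDerivAt_neg x).exp
  have hD : ∀ x : ℝ, HasDerivAt (fun y => c - Real.exp (-y)) (Real.exp (-x)) x := by
    intro x
    simpa using (hE x).const_sub c
  have hN : ∀ x : ℝ, HasDerivAt (fun y => c * y + 1/(δ:ℝ) * c) c x := by
    intro x
    simpa using ((hasDerivAt_id x).const_mul c).add_const (1/(δ:ℝ) * c)
  have hDpos : ∀ x ∈ Set.Ioi (0:ℝ), 0 < c - Real.exp (-x) := by
    intro x hx
    have hx0 : (0:ℝ) < x := hx
    have : Real.exp (-x) < 1 := Real.exp_lt_one_iff.mpr (by linarith)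
    linarith
  -- first derivative of u on Ioi 0
  have hu1 : ∀ x ∈ Set.Ioi (0:ℝ), HasDerivAt u (-(Real.exp (-x) / (c - Real.exp (-x)))) x := by
    intro x hx
    rw [funext hu]
    exact ((hD x).log (hDpos x hx).ne').neg
  -- first derivative of s on Ioi 0
  have hs1 : ∀ x ∈ Set.Ioi (0:ℝ), HasDerivAt s
      ((c * (c - Real.exp (-x)) - (c*x + 1/(δ:ℝ)*c) * Real.exp (-x)) / (c - Real.exp (-x))^2) x := by
    intro x hx
    rw [funext hs]
    exact (((hN x).div (hD x) (hDpos x hx).ne')).sub_const 1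
  intro t ht
  have hDt : 0 < c - Real.exp (-t) := hDpos t ht
  -- second derivatives
  have hu2 : deriv u =ᶠ[nhds t] fun x => -(Real.exp (-x) / (c - Real.exp (-x))) :=
    Filter.eventuallyEq_of_mem (isOpen_Ioi.mem_nhds ht) (fun x hx => (hu1 x hx).deriv)
  have hdu2 : HasDerivAt (fun x => -(Real.exp (-x) / (c - Real.exp (-x))))
      (-((-Real.exp (-t) * (c - Real.exp (-t)) - Real.exp (-t) * Real.exp (-t)) / (c - Real.exp (-t))^2)) t :=
    ((hE t).div (hD t) hDt.ne').neg
  have hu'' : deriv (deriv u) t =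
      -((-Real.exp (-t) * (c - Real.exp (-t)) - Real.exp (-t) * Real.exp (-t)) / (c - Real.exp (-t))^2) :=
    hu2.deriv_eq.trans hdu2.deriv
  have hs2 : deriv s =ᶠ[nhds t] fun x =>
      (c * (c - Real.exp (-x)) - (c*x + 1/(δ:ℝ)*c) * Real.exp (-x)) / (c - Real.exp (-x))^2 :=
    Filter.eventuallyEq_of_mem (isOpen_Ioi.mem_nhds ht) (fun x hx => (hs1 x hx).deriv)
  have hP : HasDerivAt (fun x => c * (c - Real.exp (-x)) - (c*x + 1/(δ:ℝ)*c) * Real.exp (-x))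
      (c * Real.exp (-t) - (c * Real.exp (-t) + (c*t + 1/(δ:ℝ)*c) * -Real.exp (-t))) t :=
    ((hD t).const_mul c).sub ((hN t).mul (hE t))
  have hQ : HasDerivAt (fun x => (c - Real.exp (-x))^2)
      ((2:ℕ) * (c - Real.exp (-t))^(2-1) * Real.exp (-t)) t := (hD t).pow 2
  have hdds := hP.div hQ (pow_ne_zero 2 hDt.ne')
  have hs'' := hs2.deriv_eq.trans hdds.deriv
  have hds : deriv s t =
      (c * (c - Real.exp (-t)) - (c*t + 1/(δ:ℝ)*c) * Real.exp (-t)) / (c - Real.exp (-t))^2 :=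
    (hs1 t ht).deriv
  have hdu : deriv u t = -(Real.exp (-t) / (c - Real.exp (-t))) := (hu1 t ht).deriv
  -- abbreviations
  have hEt : 0 < Real.exp (-t) := Real.exp_pos _
  have hA : t + 1 < Real.exp t := by
    have := Real.add_one_lt_exp (x := t) (by positivity)
    linarith
  have hAE : Real.exp (-t) * Real.exp t = 1 := by
    rw [← Real.exp_add]; simp
  -- positivity of deriv s numerator
  have hnum : 0 < c * (c - Real.exp (-t)) - (c*t + 1/(δ:ℝ)*c) * Real.exp (-t) := by
    have h1 : t < c * (Real.exp t - 1) := by nlinarith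
    have h2 : t * Real.exp (-t) < c * (Real.exp t - 1) * Real.exp (-t) :=
      mul_lt_mul_of_pos_right h1 hEt
    have h3 : c * (Real.exp t - 1) * Real.exp (-t) = c - c * Real.exp (-t) := by
      rw [show c * (Real.exp t - 1) * Real.exp (-t)
          = c * (Real.exp (-t) * Real.exp t) - c * Real.exp (-t) by ring, hAE]; ring
    rw [hδc]
    nlinarith [mul_pos (by linarith : (0:ℝ) < c)
      (by linarith : 0 < c - c * Real.exp (-t) - t * Real.exp (-t))]
  have hdspos : 0 < deriv s t := by
    rw [hds]; positivity
  -- key identity: u'' s - s'' = exp(-t) * s' / D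
  have hKey : deriv (deriv u) t * s t - deriv (deriv s) t
      = Real.exp (-t) * deriv s t / (c - Real.exp (-t)) := by
    rw [hu'', hs'', hs t, hds]
    field_simp
    ring
  have hKeyPos : 0 < deriv (deriv u) t * s t - deriv (deriv s) t := by
    rw [hKey]; positivity
  have hpart2 : deriv s t - s t * deriv u t = 1 := by
    rw [hds, hs t, hdu]
    field_simp
    ring
  refine ⟨?_, hpart2, ?_, ?_, hKeyPos⟩
  · have hexpu : Real.exp (u t - t) = Real.exp (-t) / (c - Real.exp (-t)) := by
      rw [hu t, show -Real.log (c - Real.exp (-t)) - t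
          = -t - Real.log (c - Real.exp (-t)) by ring, Real.exp_sub, Real.exp_log hDt]
    rw [hKey, hexpu]
    rw [hdu] at hpart2
    have h6 : (deriv s t)^2 / (Real.exp (-t) * deriv s t / (c - Real.exp (-t)))
        = deriv s t * (c - Real.exp (-t)) / Real.exp (-t) := by
      field_simp [hdspos.ne']
    rw [h6, ← hpart2]
    field_simp
    ring
  · rw [hs t, le_sub_iff_add_le, le_div_iff₀ hDt, hδc]
    have hexp : -t + 1 ≤ Real.exp (-t) := Real.add_one_le_exp (-t)
    nlinarith [mul_nonneg (by linarith : (0:ℝ) ≤ c) (by linarith : 0 ≤ Real.exp (-t) - (1 - t))]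
  · rw [hdu]
    have : 0 ≤ Real.exp (-t) / (c - Real.exp (-t)) := by positivity
    linarith
end
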